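/- For 1/2 < Δ and δ ∈ (0, e^{−e}), the modulus of continuity of the covariance function r(t) = 2·Σ_{k=1}^∞ k^{−2Δ}·cos(2^{2^k}·t) satisfies ω[r](δ) ≥ C·(ln|ln δ|)^{−2Δ} for some constant C > 0; in particular ω[r](δ)/δ^α → ∞ as δ → 0+ for every α > 0, so r is not Hölder continuous of any positive order. -/

import Mathlib

/-!
At `h = π / 2 ^ 2 ^ (k + 1)` the `k`-th term of `covFun` switches from `cos 0 = 1` to `cos π = -1`,
while every other term can only decrease, since `1 - cos ≥ 0` and all weights are positive.
Hence `r 0 - r h ≥ 4 (k + 1) ^ (-2Δ)`. For the least `k` with `h ≤ δ` the frequencies grow doubly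
exponentially, so `k + 1 = O(log |log δ|)`, which gives the lower bound. Since `log |log δ|`
grows more slowly than any power of `1 / δ`, no Hölder bound `ω[r](δ) ≤ C δ ^ α` can hold.
-/

open Real Filter

/-- The covariance function `r(t) = 2 Σ_{k=1}^∞ k^{-2Δ} cos(2^{2^k} t)`. -/
noncomputable def covFun (Δ : ℝ) (t : ℝ) : ℝ :=
  2 * ∑' k : ℕ, ((k : ℝ) + 1) ^ (-(2 * Δ)) * Real.cos ((2 : ℝ) ^ (2 ^ (k + 1)) * t)

/-- Modulus of continuity of a real-valued function on ℝ. -/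
noncomputable def modContR (f : ℝ → ℝ) (δ : ℝ) : ℝ :=
  sSup {y : ℝ | ∃ t h : ℝ, |h| ≤ δ ∧ y = |f (t + h) - f t|}

open Topology Asymptotics

lemma summable_nat_add_one_rpow_neg {p : ℝ} (hp : 1 < p) :
    Summable fun k : ℕ => ((k : ℝ) + 1) ^ (-p) :=
  ((summable_nat_add_iff 1).2 (Real.summable_nat_rpow.2 (neg_lt_neg hp))).congr fun k => by
    push_cast; rfl

lemma summable_mul_cos {a : ℕ → ℝ} (ha : Summable a) (ha0 : ∀ k, 0 ≤ a k) (ω : ℕ → ℝ) (t : ℝ) :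
    Summable fun k => a k * cos (ω k * t) :=
  ha.of_norm_bounded fun k => by
    rw [norm_mul, Real.norm_of_nonneg (ha0 k)]
    exact mul_le_of_le_one_right (ha0 k) (abs_cos_le_one _)

lemma mul_one_sub_cos_le_tsum_sub_tsum {a : ℕ → ℝ} (ha : Summable a) (ha0 : ∀ k, 0 ≤ a k)
    (ω : ℕ → ℝ) (t : ℝ) (k : ℕ) :
    a k * (1 - cos (ω k * t)) ≤ ∑' j, a j - ∑' j, a j * cos (ω j * t) := by
  have hcos := summable_mul_cos ha ha0 ω t
  have hsum : Summable fun j => a j * (1 - cos (ω j * t)) := (ha.sub hcos).congr fun j => by ring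
  rw [← ha.tsum_sub hcos]
  calc a k * (1 - cos (ω k * t)) ≤ ∑' j, a j * (1 - cos (ω j * t)) :=
        hsum.le_tsum k fun j _ => mul_nonneg (ha0 j) (sub_nonneg.2 (cos_le_one _))
    _ = ∑' j, (a j - a j * cos (ω j * t)) := tsum_congr fun j => by ring

lemma le_modContR {f : ℝ → ℝ} {M δ : ℝ} (hf : ∀ t, |f t| ≤ M) {t h : ℝ} (hh : |h| ≤ δ) :
    |f (t + h) - f t| ≤ modContR f δ := by
  refine le_csSup ⟨2 * M, ?_⟩ ⟨t, h, hh, rfl⟩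
  rintro _ ⟨s, u, -, rfl⟩
  linarith [abs_sub (f (s + u)) (f s), hf (s + u), hf s]

lemma modContR_le_of_holder {f : ℝ → ℝ} {C α δ : ℝ} (hα : 0 ≤ α) (hδ : 0 ≤ δ)
    (hf : ∀ t s, |f t - f s| ≤ C * |t - s| ^ α) : modContR f δ ≤ C * δ ^ α := by
  have hC : 0 ≤ C := by simpa using (abs_nonneg _).trans (hf 1 0)
  refine csSup_le ⟨_, 0, 0, by simpa using hδ, rfl⟩ ?_
  rintro _ ⟨t, h, hh, rfl⟩
  calc |f (t + h) - f t| ≤ C * |t + h - t| ^ α := hf _ _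
    _ ≤ C * δ ^ α := by
      rw [add_sub_cancel_left]
      exact mul_le_mul_of_nonneg_left (rpow_le_rpow (abs_nonneg h) hh hα) hC

lemma abs_covFun_le {Δ : ℝ} (hΔ : 1 / 2 < Δ) (t : ℝ) :
    |covFun Δ t| ≤ 2 * ∑' k : ℕ, ((k : ℝ) + 1) ^ (-(2 * Δ)) := by
  rw [covFun, abs_mul, abs_two, ← Real.norm_eq_abs]
  gcongr
  refine tsum_of_norm_bounded
    (summable_nat_add_one_rpow_neg (p := 2 * Δ) (by linarith)).hasSum fun k => ?_
  rw [norm_mul, Real.norm_of_nonneg (by positivity)]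
  exact mul_le_of_le_one_right (by positivity) (abs_cos_le_one _)

lemma four_mul_rpow_le_modContR_covFun {Δ δ : ℝ} (hΔ : 1 / 2 < Δ) {k : ℕ}
    (hk : π ≤ δ * 2 ^ 2 ^ (k + 1)) :
    4 * ((k : ℝ) + 1) ^ (-(2 * Δ)) ≤ modContR (covFun Δ) δ := by
  set a : ℕ → ℝ := fun j => ((j : ℝ) + 1) ^ (-(2 * Δ))
  set ω : ℕ → ℝ := fun j => 2 ^ 2 ^ (j + 1)
  set h := π / ω k
  have hω : 0 < ω k := by positivity
  have hωh : ω k * h = π := mul_div_cancel₀ π hω.ne'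
  have hh : |h| ≤ δ := by
    rw [abs_of_pos (div_pos pi_pos hω), div_le_iff₀ hω]
    exact hk
  have hdrop : covFun Δ 0 - covFun Δ h = 2 * (∑' j, a j - ∑' j, a j * cos (ω j * h)) := by
    simp [covFun, a, ω, mul_sub]
  have hk_term := mul_one_sub_cos_le_tsum_sub_tsum
    (summable_nat_add_one_rpow_neg (p := 2 * Δ) (by linarith))
    (fun j => by positivity) ω h k
  rw [hωh, cos_pi] at hk_term
  calc 4 * a k ≤ covFun Δ 0 - covFun Δ h := by linarith
    _ ≤ |covFun Δ (0 + h) - covFun Δ 0| := by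
      rw [zero_add, abs_sub_comm]
      exact le_abs_self _
    _ ≤ modContR (covFun Δ) δ := le_modContR (abs_covFun_le hΔ) hh

lemma exists_le_two_pow_two_pow_succ (y : ℝ) :
    ∃ k : ℕ, y ≤ 2 ^ 2 ^ (k + 1) ∧ (k = 0 ∨ (2 : ℝ) ^ 2 ^ k < y) := by
  classical
  have hex : ∃ k : ℕ, y ≤ 2 ^ 2 ^ (k + 1) := by
    obtain ⟨n, hn⟩ := pow_unbounded_of_one_lt y one_lt_two
    refine ⟨n, hn.le.trans (pow_le_pow_right₀ one_le_two ?_)⟩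
    exact (Nat.lt_two_pow_self).le.trans (Nat.pow_le_pow_right two_pos n.le_succ)
  refine ⟨Nat.find hex, Nat.find_spec hex, ?_⟩
  rcases h : Nat.find hex with _ | j
  · exact Or.inl rfl
  · exact Or.inr (not_le.1 (Nat.find_min hex (h ▸ j.lt_succ_self)))

lemma nat_add_one_le_of_two_pow_two_pow_lt {X : ℝ} (hX : exp 1 < X) {k : ℕ}
    (hk : (2 : ℝ) ^ 2 ^ k < π * exp X) : (k : ℝ) + 1 ≤ 7 * log X := by
  have hX0 : 0 < X := (exp_pos 1).trans hX
  have hlogX : 1 < log X := by simpa using log_lt_log (exp_pos 1) hX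
  have hlog2 : (1 / 2 : ℝ) < log 2 := by linarith [log_two_gt_d9]
  have hlogπ : log π < 2.15 := by linarith [log_le_sub_one_of_pos pi_pos, pi_lt_d2]
  have hpow_log : (2 : ℝ) ^ k * log 2 < log π + X := by
    simpa [log_pow, log_mul pi_ne_zero (exp_pos X).ne'] using log_lt_log (by positivity) hk
  have hX27 : (2.7 : ℝ) < X := by linarith [exp_one_gt_d9]
  -- `X ^ 3` absorbs both the constant `log π` and the factor `1 / log 2`
  have hpow_cube : (2 : ℝ) ^ k < X ^ 3 := by
    have hsq : (7.29 : ℝ) < X ^ 2 := by nlinarith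
    have : (2 : ℝ) ^ k < 2 * (2.15 + X) := by nlinarith [pow_pos (two_pos : (0 : ℝ) < 2) k]
    nlinarith
  have hk_log : (k : ℝ) * log 2 < 3 * log X := by
    simpa [log_pow] using log_lt_log (by positivity) hpow_cube
  nlinarith

lemma mul_log_abs_log_rpow_le_modContR_covFun {Δ δ : ℝ} (hΔ : 1 / 2 < Δ)
    (hδ : δ ∈ Set.Ioo (0 : ℝ) (exp (-exp 1))) :
    4 * (7 : ℝ) ^ (-(2 * Δ)) * log |log δ| ^ (-(2 * Δ)) ≤ modContR (covFun Δ) δ := by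
  obtain ⟨hδ0, hδe⟩ := hδ
  have hlogδ : log δ < -exp 1 := by simpa using log_lt_log hδ0 hδe
  rw [abs_of_neg (hlogδ.trans (neg_neg_of_pos (exp_pos 1)))]
  set X := -log δ
  have hX : exp 1 < X := by linarith
  have hδX : δ = exp (-X) := by rw [neg_neg, exp_log hδ0]
  have hlogX : 1 < log X := by simpa using log_lt_log (exp_pos 1) hX
  obtain ⟨k, hk, hmin⟩ := exists_le_two_pow_two_pow_succ (π * exp X)
  have hkX : (k : ℝ) + 1 ≤ 7 * log X := by
    rcases hmin with rfl | hlt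
    · norm_num; linarith
    · exact nat_add_one_le_of_two_pow_two_pow_lt hX hlt
  have hk' : π ≤ δ * 2 ^ 2 ^ (k + 1) := by
    rw [hδX, ← div_le_iff₀' (exp_pos _), div_eq_mul_inv, ← exp_neg, neg_neg]
    exact hk
  calc 4 * (7 : ℝ) ^ (-(2 * Δ)) * log X ^ (-(2 * Δ)) = 4 * (7 * log X) ^ (-(2 * Δ)) := by
        rw [mul_rpow (by norm_num) (by linarith), mul_assoc]
    _ ≤ 4 * ((k : ℝ) + 1) ^ (-(2 * Δ)) := by
        refine mul_le_mul_of_nonneg_left ?_ (by norm_num)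
        exact rpow_le_rpow_of_nonpos (Nat.cast_add_one_pos k) hkX (by linarith)
    _ ≤ modContR (covFun Δ) δ := four_mul_rpow_le_modContR_covFun hΔ hk'

lemma isLittleO_log_log_rpow_rpow_atTop (p : ℝ) {α : ℝ} (hα : 0 < α) :
    (fun y => log (log y) ^ p) =o[atTop] fun y => y ^ α := by
  have h := (isLittleO_log_rpow_rpow_atTop p one_pos).comp_tendsto tendsto_log_atTop
  simp only [Function.comp_def, rpow_one] at h
  exact h.trans (isLittleO_log_rpow_atTop hα)

lemma tendsto_log_abs_log_rpow_neg_div_rpow (p : ℝ) {α : ℝ} (hα : 0 < α) :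
    Tendsto (fun δ => log |log δ| ^ (-p) / δ ^ α) (𝓝[>] 0) atTop := by
  have hpos : ∀ᶠ y in atTop, 0 < log (log y) ^ p / y ^ α := by
    filter_upwards [eventually_gt_atTop (exp 1)] with y hy
    have hy0 : 0 < y := (exp_pos 1).trans hy
    have hlog : 1 < log y := by simpa using log_lt_log (exp_pos 1) hy
    have := log_pos hlog
    positivity
  have hzero : Tendsto (fun y => log (log y) ^ p / y ^ α) atTop (𝓝[>] 0) :=
    tendsto_nhdsWithin_iff.2
      ⟨(isLittleO_log_log_rpow_rpow_atTop p hα).tendsto_div_nhds_zero, hpos⟩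
  have hinv : Tendsto (fun y => (log (log y) ^ p / y ^ α)⁻¹) atTop atTop :=
    hzero.inv_tendsto_nhdsGT_zero
  refine (hinv.comp tendsto_inv_nhdsGT_zero).congr' ?_
  filter_upwards [Ioo_mem_nhdsGT (exp_pos (-1))] with δ ⟨hδ0, hδe⟩
  have hlogδ : log δ < -1 := by simpa using log_lt_log hδ0 hδe
  have hlog : log δ⁻¹ = |log δ| := by rw [log_inv, abs_of_neg (by linarith)]
  have hloglog : 0 ≤ log |log δ| := log_nonneg (by rw [abs_of_neg (by linarith)]; linarith)
  simp only [Function.comp_apply, hlog, inv_rpow hδ0.le, inv_div, rpow_neg hloglog]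
  ring

lemma tendsto_modContR_covFun_div_rpow {Δ : ℝ} (hΔ : 1 / 2 < Δ) {α : ℝ} (hα : 0 < α) :
    Tendsto (fun δ => modContR (covFun Δ) δ / δ ^ α) (𝓝[>] 0) atTop := by
  refine tendsto_atTop_mono' _ ?_
    ((tendsto_log_abs_log_rpow_neg_div_rpow (2 * Δ) hα).const_mul_atTop
      (by positivity : (0 : ℝ) < 4 * 7 ^ (-(2 * Δ))))
  filter_upwards [Ioo_mem_nhdsGT (exp_pos (-exp 1))] with δ hδ
  rw [← mul_div_assoc]
  exact div_le_div_of_nonneg_right (mul_log_abs_log_rpow_le_modContR_covFun hΔ hδ)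
    (rpow_nonneg hδ.1.le _)

/-- `ω[r](δ) ≥ C (ln |ln δ|)^{-2Δ}` on `(0, e^{-e})`; in particular
`ω[r](δ)/δ^α → ∞` as `δ → 0⁺` for every `α > 0`, so `r` is not Hölder continuous
of any positive order. -/
theorem covFun_modCont_lower_not_Holder (Δ : ℝ) (hΔ : 1 / 2 < Δ) :
    (∃ C : ℝ, 0 < C ∧ ∀ δ : ℝ, δ ∈ Set.Ioo (0 : ℝ) (Real.exp (-(Real.exp 1))) →
        C * Real.log |Real.log δ| ^ (-(2 * Δ)) ≤ modContR (covFun Δ) δ)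
    ∧ (∀ α : ℝ, 0 < α →
        Tendsto (fun δ : ℝ => modContR (covFun Δ) δ / δ ^ α)
          (nhdsWithin 0 (Set.Ioi 0)) atTop)
    ∧ (∀ α : ℝ, 0 < α →
        ¬ ∃ C' : ℝ, ∀ t s : ℝ, |covFun Δ t - covFun Δ s| ≤ C' * |t - s| ^ α) := by
  refine ⟨⟨_, by positivity, fun δ hδ => mul_log_abs_log_rpow_le_modContR_covFun hΔ hδ⟩,
    fun α hα => tendsto_modContR_covFun_div_rpow hΔ hα, ?_⟩
  rintro α hα ⟨C', hC'⟩
  obtain ⟨δ, hlarge, hδ⟩ :=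
    (((tendsto_modContR_covFun_div_rpow hΔ hα).eventually_gt_atTop C').and
      self_mem_nhdsWithin).exists
  have hδα : 0 < δ ^ α := rpow_pos_of_pos hδ _
  rw [lt_div_iff₀ hδα] at hlarge
  exact (modContR_le_of_holder hα.le (le_of_lt hδ) hC').not_gt hlarge
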